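/- arXiv:1209.6256 — 4 statements merged into one kernel-verified Lean document; each statement's English description precedes it below -/
import Mathlib

section
/- Let R be an associative ring, S a nonempty subset of R, and z a central element of R. Define S^{(1)} = R and, for i ≥ 2, let S^{(i)} be the two-sided ideal of R generated by all elements [a,b] = ab - ba with a ∈ S^{(i-1)} and b ∈ S. If S^{(i)} ⊆ zR for some i ≥ 1, then for all j > 0 we have S^{(i+j)} ⊆ z·S^{(j)}. -/
/-- The two-sided ideal (as a set) generated by a subset `T` of a ring. -/
def ringSpan {R : Type*} [Ring R] (T : Set R) : Set R :=
  (AddSubgroup.closure {x : R | ∃ r s : R, ∃ t ∈ T, x = r * t * s} : AddSubgroup R)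

/-- The strong Lie lower central series of a subset `S`:
`S^{(1)} = R`, and `S^{(i+1)}` is the two-sided ideal generated by all `[a,b]`
with `a ∈ S^{(i)}`, `b ∈ S`. -/
def SLC {R : Type*} [Ring R] (S : Set R) : ℕ → Set R
  | 0 => Set.univ
  | 1 => Set.univ
  | (n+2) => ringSpan {x | ∃ a ∈ SLC S (n+1), ∃ b ∈ S, x = a * b - b * a}

/-!
Since `z` is central, `[z a, b] = z [a, b]` and `r (z x) s = z (r x s)`, so `z · S^{(j+1)}` is an
additive subgroup containing every `r [z a, b] s` with `a ∈ S^{(j)}`, `b ∈ S`. Hence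
`S^{(k)} ⊆ z · S^{(j)}` implies `S^{(k+1)} ⊆ z · S^{(j+1)}` for `k ≥ 1`, and induction on `j`
starting from `S^{(i)} ⊆ z R = z · S^{(0)}` gives the claim.
-/

section

variable {R : Type*} [Ring R]

theorem mul_mul_mem_ringSpan {T : Set R} {t : R} (ht : t ∈ T) (r s : R) :
    r * t * s ∈ ringSpan T :=
  AddSubgroup.subset_closure ⟨r, s, t, ht, rfl⟩

theorem ringSpan_subset {T : Set R} {A : AddSubgroup R}
    (hA : ∀ t ∈ T, ∀ r s : R, r * t * s ∈ A) : ringSpan T ⊆ A :=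
  (AddSubgroup.closure_le A).2 <| by
    rintro _ ⟨r, s, t, ht, rfl⟩
    exact hA t ht r s

theorem central_mul_commutator {z : R} (hz : ∀ r : R, z * r = r * z) (a b r s : R) :
    r * (z * a * b - b * (z * a)) * s = z * (r * (a * b - b * a) * s) := by
  simp only [mul_sub, sub_mul, ← mul_assoc, ← hz]

def SLC.addSubgroup (S : Set R) : ℕ → AddSubgroup R
  | 0 => ⊤
  | 1 => ⊤
  | (n+2) => AddSubgroup.closure
      {x : R | ∃ r s : R, ∃ t ∈ {x | ∃ a ∈ SLC S (n+1), ∃ b ∈ S, x = a * b - b * a},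
        x = r * t * s}

theorem SLC.coe_addSubgroup (S : Set R) : ∀ n, (SLC.addSubgroup S n : Set R) = SLC S n
  | 0 | 1 | _ + 2 => rfl

theorem SLC.succ_succ (S : Set R) (n : ℕ) :
    SLC S (n + 2) = ringSpan {x | ∃ a ∈ SLC S (n + 1), ∃ b ∈ S, x = a * b - b * a} :=
  rfl

theorem SLC.mul_commutator_mul_mem {S : Set R} {n : ℕ} {a b : R} (ha : a ∈ SLC S n)
    (hb : b ∈ S) (r s : R) : r * (a * b - b * a) * s ∈ SLC S (n + 1) := by
  cases n with
  | zero => trivial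
  | succ m =>
    rw [SLC.succ_succ]
    exact mul_mul_mem_ringSpan (T := {x | ∃ a ∈ SLC S (m + 1), ∃ b ∈ S, x = a * b - b * a})
      ⟨a, ha, b, hb, rfl⟩ r s

theorem SLC.succ_succ_subset_mul_left {S : Set R} {z : R} (hz : ∀ r : R, z * r = r * z)
    {k j : ℕ} (h : SLC S (k + 1) ⊆ {x | ∃ s ∈ SLC S j, x = z * s}) :
    SLC S (k + 2) ⊆ {x | ∃ s ∈ SLC S (j + 1), x = z * s} := by
  have hmap : {x | ∃ s ∈ SLC S (j + 1), x = z * s} =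
      ((SLC.addSubgroup S (j + 1)).map (AddMonoidHom.mulLeft z) : Set R) := by
    ext x
    simp [SLC.coe_addSubgroup, eq_comm]
  rw [hmap, SLC.succ_succ]
  refine ringSpan_subset ?_
  rintro _ ⟨a, ha, b, hb, rfl⟩ r s
  obtain ⟨a', ha', rfl⟩ := h ha
  rw [central_mul_commutator hz]
  refine AddSubgroup.mem_map.2 ⟨_, ?_, rfl⟩
  rw [← SetLike.mem_coe, SLC.coe_addSubgroup]
  exact SLC.mul_commutator_mul_mem ha' hb r s

end

theorem stmt_0_general {R : Type*} [Ring R] (S : Set R)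
    (z : R) (hz : ∀ r : R, z * r = r * z)
    (i : ℕ) (hi : 1 ≤ i) (h : SLC S i ⊆ {x : R | ∃ r : R, x = z * r}) :
    ∀ j : ℕ, 0 < j → SLC S (i + j) ⊆ {x : R | ∃ s ∈ SLC S j, x = z * s} := by
  obtain ⟨k, rfl⟩ : ∃ k, i = k + 1 := ⟨i - 1, by omega⟩
  suffices ∀ j, SLC S (k + j + 1) ⊆ {x : R | ∃ s ∈ SLC S j, x = z * s} from
    fun j _ => Nat.add_right_comm k 1 j ▸ this j
  intro j
  induction j with
  | zero => simpa [SLC] using h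
  | succ j ih => exact SLC.succ_succ_subset_mul_left hz ih

/-- If `S^{(i)} ⊆ zR` for a central element `z`, then `S^{(i+j)} ⊆ z·S^{(j)}` for all `j > 0`. -/
theorem stmt_0 {R : Type*} [Ring R] (S : Set R) (hS : S.Nonempty)
    (z : R) (hz : ∀ r : R, z * r = r * z)
    (i : ℕ) (hi : 1 ≤ i) (h : SLC S i ⊆ {x : R | ∃ r : R, x = z * r}) :
    ∀ j : ℕ, 0 < j → SLC S (i + j) ⊆ {x : R | ∃ s ∈ SLC S j, x = z * s} :=
  stmt_0_general S z hz i hi h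
end

section
/- Let R be an associative ring with unity and S a nonempty subset of R whose set of units U(S) = S ∩ U(R) is nonempty. If S is strongly Lie nilpotent with S^{(n)} = 0, then γ_n(U(S)) ⊆ 1 + S^{(n)} for all n ≥ 2; in particular U(S) is a nilpotent set with nilpotency class cl(U(S)) < t^L(S), where t^L(S) is the minimal n with S^{(n)} = 0. -/
/-- The lower central series of a subset `H` of a group:
`γ_1(H) = H` and `γ_{n+1}(H)` is the subgroup generated by all commutators
`(x,y) = x⁻¹y⁻¹xy` with `x ∈ γ_n(H)`, `y ∈ H`. -/
def gammaG {G : Type*} [Group G] (H : Set G) : ℕ → Set G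
  | 0 => H
  | 1 => H
  | (n+2) => (Subgroup.closure
      {z | ∃ x ∈ gammaG H (n+1), ∃ y ∈ H, z = x⁻¹ * y⁻¹ * x * y} : Subgroup G)

namespace TwoSidedIdeal

variable {R : Type*} [Ring R]

lemma coe_span_eq_ringSpan (T : Set R) : (span T : Set R) = ringSpan T := by
  open scoped Pointwise in
  have h : (Set.univ : Set R) * T * Set.univ =
      {x : R | ∃ r s : R, ∃ t ∈ T, x = r * t * s} := by
    ext x
    simp only [Set.mem_mul, Set.mem_univ, true_and]
    constructor
    · rintro ⟨_, ⟨r, t, ht, rfl⟩, s, rfl⟩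
      exact ⟨r, s, t, ht, rfl⟩
    · rintro ⟨r, s, t, ht, rfl⟩
      exact ⟨_, ⟨r, t, ht, rfl⟩, s, rfl⟩
  ext x
  rw [SetLike.mem_coe, mem_span_iff_mem_addSubgroup_closure, h]
  rfl

def unitsOneAdd (I : TwoSidedIdeal R) : Subgroup Rˣ :=
  (Units.map (I.ringCon.mk' : R →* I.ringCon.Quotient)).ker

lemma mem_unitsOneAdd {I : TwoSidedIdeal R} {u : Rˣ} :
    u ∈ I.unitsOneAdd ↔ (u : R) - 1 ∈ I := by
  rw [unitsOneAdd, MonoidHom.mem_ker, Units.ext_iff, Units.coe_map, Units.val_one,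
    ← map_one (I.ringCon.mk' : R →* I.ringCon.Quotient)]
  exact (RingCon.eq _).trans (I.rel_iff _ _)

end TwoSidedIdeal

lemma Units.val_commutator_sub_one {R : Type*} [Ring R] (x y : Rˣ) :
    ((x⁻¹ * y⁻¹ * x * y : Rˣ) : R) - 1 = ↑x⁻¹ * (↑y⁻¹ * (x * y - y * x)) := by
  rw [mul_sub, mul_sub, Units.inv_mul_cancel_left, ← mul_assoc, ← mul_assoc,
    Units.inv_mul]
  push_cast
  noncomm_ring

section SLC

variable {R : Type*} [Ring R] (S : Set R)

def slcIdeal : ℕ → TwoSidedIdeal R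
  | 0 | 1 => ⊤
  | n + 2 => .span {x | ∃ a ∈ SLC S (n + 1), ∃ b ∈ S, x = a * b - b * a}

lemma coe_slcIdeal (n : ℕ) : (slcIdeal S n : Set R) = SLC S n :=
  match n with
  | 0 | 1 => rfl
  | _ + 2 => TwoSidedIdeal.coe_span_eq_ringSpan _

variable {S}

lemma SLC_of_le_one {n : ℕ} (hn : n ≤ 1) : SLC S n = Set.univ := by
  interval_cases n <;> rfl

lemma sub_mem_SLC_succ {n : ℕ} {a b : R} (ha : a ∈ SLC S (n + 1)) (hb : b ∈ S) :
    a * b - b * a ∈ SLC S (n + 2) := by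
  rw [← coe_slcIdeal]
  exact TwoSidedIdeal.subset_span ⟨a, ha, b, hb, rfl⟩

lemma units_sub_one_mem_SLC_of_mem_gammaG (n : ℕ) {u : Rˣ}
    (hu : u ∈ gammaG {u : Rˣ | (u : R) ∈ S} (n + 1)) : (u : R) - 1 ∈ SLC S (n + 1) := by
  induction n generalizing u with
  | zero => exact Set.mem_univ _
  | succ n ih =>
    rw [← coe_slcIdeal, SetLike.mem_coe, ← TwoSidedIdeal.mem_unitsOneAdd]
    refine (Subgroup.closure_le _).mpr ?_ hu
    rintro _ ⟨x, hx, y, hy, rfl⟩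
    rw [SetLike.mem_coe, TwoSidedIdeal.mem_unitsOneAdd, Units.val_commutator_sub_one]
    refine TwoSidedIdeal.mul_mem_left _ _ _ (TwoSidedIdeal.mul_mem_left _ _ _ ?_)
    have hxy : (x : R) * y - y * x = (x - 1) * y - y * (x - 1) := by noncomm_ring
    rw [hxy, ← SetLike.mem_coe, coe_slcIdeal]
    exact sub_mem_SLC_succ (ih hx) hy

lemma two_le_sInf_SLC_eq_zero [Nontrivial R] (hnil : ∃ n : ℕ, SLC S n = {0}) :
    2 ≤ sInf {n : ℕ | SLC S n = {0}} := by
  by_contra! h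
  have hzero : SLC S (sInf {n : ℕ | SLC S n = {0}}) = {0} := Nat.sInf_mem hnil
  rw [SLC_of_le_one (by omega)] at hzero
  exact one_ne_zero (hzero ▸ Set.mem_univ (1 : R))

end SLC

theorem stmt_3_general {R : Type*} [Ring R] [Nontrivial R] (S : Set R)
    (hnil : ∃ n : ℕ, SLC S n = {0}) :
    (∀ n : ℕ, 2 ≤ n → ∀ u ∈ gammaG {u : Rˣ | (u : R) ∈ S} n, ((u : R) - 1) ∈ SLC S n) ∧
    (∃ c : ℕ, gammaG {u : Rˣ | (u : R) ∈ S} (c + 1) ⊆ {1}) ∧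
    sInf {c : ℕ | gammaG {u : Rˣ | (u : R) ∈ S} (c + 1) ⊆ {1}} <
      sInf {n : ℕ | SLC S n = {0}} := by
  have hfilt : ∀ n : ℕ, 2 ≤ n →
      ∀ u ∈ gammaG {u : Rˣ | (u : R) ∈ S} n, ((u : R) - 1) ∈ SLC S n := by
    rintro (_ | n) hn u hu
    · omega
    · exact units_sub_one_mem_SLC_of_mem_gammaG n hu
  set t := sInf {n : ℕ | SLC S n = {0}}
  have ht : SLC S t = {0} := Nat.sInf_mem hnil
  have h2 : 2 ≤ t := two_le_sInf_SLC_eq_zero hnil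
  have hclass : gammaG {u : Rˣ | (u : R) ∈ S} (t - 1 + 1) ⊆ {1} := by
    intro u hu
    have hu1 := hfilt t h2 u (by rwa [Nat.sub_add_cancel (by omega)] at hu)
    rw [ht, Set.mem_singleton_iff, sub_eq_zero, Units.val_eq_one] at hu1
    exact hu1
  exact ⟨hfilt, ⟨t - 1, hclass⟩, (Nat.sInf_le hclass).trans_lt (by omega)⟩

/-- If `S` is strongly Lie nilpotent then `γ_n(U(S)) ⊆ 1 + S^{(n)}` for `n ≥ 2`; in
particular the set of units `U(S) = S ∩ U(R)` is nilpotent and `cl(U(S)) < t^L(S)`. -/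
theorem stmt_3 {R : Type*} [Ring R] [Nontrivial R] (S : Set R) (hS : S.Nonempty)
    (hU : {u : Rˣ | (u : R) ∈ S}.Nonempty)
    (hnil : ∃ n : ℕ, SLC S n = {0}) :
    (∀ n : ℕ, 2 ≤ n → ∀ u ∈ gammaG {u : Rˣ | (u : R) ∈ S} n, ((u : R) - 1) ∈ SLC S n) ∧
    (∃ c : ℕ, gammaG {u : Rˣ | (u : R) ∈ S} (c + 1) ⊆ {1}) ∧
    sInf {c : ℕ | gammaG {u : Rˣ | (u : R) ∈ S} (c + 1) ⊆ {1}} <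
      sInf {n : ℕ | SLC S n = {0}} :=
  stmt_3_general S hnil
end

section
/- Let F be a field of characteristic different from 2, G a group, and σ : G → {±1} an orientation with kernel N. Then the set (FG)^- of skew-symmetric elements under the oriented classical involution is spanned as an F-module by {g + g^{-1} : g ∈ G \ N} ∪ {g - g^{-1} : g ∈ N, g^2 ≠ 1}. -/
/-!
Every `α` satisfies `α - α* = Σ_g α_g (g - σ(g) g⁻¹)`, and each `g - σ(g) g⁻¹` is one of the
spanning elements `g ± g⁻¹`, or zero when `g ∈ N` and `g² = 1`. A skew-symmetric `α` is
`½ (α - α*)`, which is where `char F ≠ 2` enters; conversely each spanning element is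
skew-symmetric because `σ(g⁻¹) = σ(g)`.
-/

/-- The oriented classical involution of the group algebra `FG` attached to an
orientation `σ : G → {±1}`: `(Σ α_g g)^* = Σ α_g σ(g) g⁻¹`. -/
noncomputable def orInv {F : Type*} [Field F] {G : Type*} [Group G] (σ : G →* ℤˣ)
    (α : MonoidAlgebra F G) : MonoidAlgebra F G :=
  MonoidAlgebra.ofCoeff (α.coeff.sum fun g a => Finsupp.single g⁻¹ (((σ g : ℤ) : F) * a))

open MonoidAlgebra Submodule

section

variable {F : Type*} [Field F] {G : Type*} [Group G] (σ : G →* ℤˣ)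

lemma orInv_add (α β : MonoidAlgebra F G) : orInv σ (α + β) = orInv σ α + orInv σ β := by
  unfold orInv
  rw [coeff_add, Finsupp.sum_add_index' (fun _ => by simp)
    (fun _ _ _ => by rw [mul_add, Finsupp.single_add]), ofCoeff_add]

lemma orInv_smul (c : F) (α : MonoidAlgebra F G) : orInv σ (c • α) = c • orInv σ α := by
  unfold orInv
  rw [coeff_smul, Finsupp.sum_smul_index' (fun _ => by simp), ← ofCoeff_smul, Finsupp.smul_sum]
  simp only [Finsupp.smul_single, smul_eq_mul, mul_left_comm]

noncomputable def orInvₗ : MonoidAlgebra F G →ₗ[F] MonoidAlgebra F G where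
  toFun := orInv σ
  map_add' := orInv_add σ
  map_smul' := orInv_smul σ

lemma orInv_zero : orInv σ (0 : MonoidAlgebra F G) = 0 :=
  (orInvₗ σ).map_zero

lemma orInv_sub (α β : MonoidAlgebra F G) : orInv σ (α - β) = orInv σ α - orInv σ β :=
  (orInvₗ σ).map_sub α β

lemma orInv_single (g : G) (a : F) :
    orInv σ (single g a) = single g⁻¹ (((σ g : ℤ) : F) * a) := by
  rw [orInv, coeff_single, Finsupp.sum_single_index (by rw [mul_zero, Finsupp.single_zero])]
  rfl

lemma orInv_of (g : G) : orInv σ (of F G g) = ((σ g : ℤ) : F) • of F G g⁻¹ := by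
  rw [of_apply, of_apply, orInv_single, smul_single', mul_one]

lemma orientation_inv (g : G) : σ g⁻¹ = σ g := by
  rw [map_inv, Int.units_inv_eq_self]

lemma orientation_eq_neg_one_of_notMem_ker {g : G} (hg : g ∉ σ.ker) : σ g = -1 :=
  (Int.units_eq_one_or (σ g)).resolve_left hg

variable (F) in
def skewSpanningSet : Set (MonoidAlgebra F G) :=
  {z | ∃ g : G, g ∉ σ.ker ∧ z = of F G g + of F G g⁻¹} ∪
    {z | ∃ g ∈ σ.ker, g ^ 2 ≠ 1 ∧ z = of F G g - of F G g⁻¹}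

lemma of_sub_smul_of_inv_mem_span (g : G) :
    of F G g - ((σ g : ℤ) : F) • of F G g⁻¹ ∈ span F (skewSpanningSet F σ) := by
  rcases Int.units_eq_one_or (σ g) with hσ | hσ
  · by_cases hg : g ^ 2 = 1
    · rw [inv_eq_of_mul_eq_one_right (pow_two g ▸ hg), hσ]
      simp
    · apply subset_span
      exact Or.inr ⟨g, hσ, hg, by simp [hσ]⟩
  · apply subset_span
    refine Or.inl ⟨g, fun h => ?_, by simp [hσ]⟩
    rw [MonoidHom.mem_ker, hσ] at h
    exact absurd h (by decide)

lemma sub_orInv_mem_span (α : MonoidAlgebra F G) :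
    α - orInv σ α ∈ span F (skewSpanningSet F σ) := by
  induction α using MonoidAlgebra.induction_linear with
  | zero => simp [orInv_zero]
  | add x y hx hy =>
    rw [orInv_add, add_sub_add_comm]
    exact add_mem hx hy
  | single g a =>
    have : single g a = a • of F G g := by rw [of_apply, smul_single', mul_one]
    rw [this, orInv_smul, orInv_of, ← smul_sub]
    exact smul_mem _ _ (of_sub_smul_of_inv_mem_span σ g)

lemma skewSpanningSet_subset_eqLocus :
    skewSpanningSet F σ ⊆ LinearMap.eqLocus (orInvₗ (F := F) σ) (-LinearMap.id) := by
  rintro z (⟨g, hg, rfl⟩ | ⟨g, hg, -, rfl⟩) <;> show orInv σ _ = -_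
  · rw [orInv_add, orInv_of, orInv_of, orientation_inv, inv_inv,
      orientation_eq_neg_one_of_notMem_ker σ hg]
    simp only [Units.val_neg, Units.val_one, Int.cast_neg, Int.cast_one, neg_one_smul,
      LinearMap.id_apply]
    abel
  · rw [MonoidHom.mem_ker] at hg
    rw [orInv_sub, orInv_of, orInv_of, orientation_inv, inv_inv, hg]
    simp only [Units.val_one, Int.cast_one, one_smul, LinearMap.id_apply, neg_sub]

end

/-- If `char F ≠ 2`, the skew-symmetric elements `(FG)^-` of the oriented classical
involution with orientation kernel `N = ker σ` form the `F`-span of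
`{g + g⁻¹ : g ∈ G \ N} ∪ {g - g⁻¹ : g ∈ N, g² ≠ 1}`. -/
theorem stmt_6 {F : Type*} [Field F] (h2 : ringChar F ≠ 2)
    {G : Type*} [Group G] (σ : G →* ℤˣ) :
    {α : MonoidAlgebra F G | orInv σ α = -α} =
      (Submodule.span F
        ({z : MonoidAlgebra F G | ∃ g : G, g ∉ σ.ker ∧
            z = MonoidAlgebra.of F G g + MonoidAlgebra.of F G g⁻¹} ∪
         {z : MonoidAlgebra F G | ∃ g ∈ σ.ker, g ^ 2 ≠ 1 ∧
            z = MonoidAlgebra.of F G g - MonoidAlgebra.of F G g⁻¹}) : Set (MonoidAlgebra F G)) := by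
  change (LinearMap.eqLocus (orInvₗ (F := F) σ) (-LinearMap.id) : Set (MonoidAlgebra F G)) =
    span F (skewSpanningSet F σ)
  refine congrArg _ (le_antisymm (fun α (hα : orInv σ α = -α) => ?_)
    (span_le.mpr (skewSpanningSet_subset_eqLocus σ)))
  have h2F : (2 : F) ≠ 0 := Ring.two_ne_zero h2
  have hα_half : α = (2 : F)⁻¹ • (α - orInv σ α) := by
    rw [hα, sub_neg_eq_add, ← two_smul F, smul_smul, inv_mul_cancel₀ h2F, one_smul]
  rw [hα_half]
  exact smul_mem _ _ (sub_orInv_mem_span σ α)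
end

section
/- Let F be a field of characteristic p > 2 and P a powerful finite p-group. Write D_n for the n-th dimension subgroup of P over F (so h ∈ D_n iff h - 1 ∈ Δ(P)^n). If h_i - 1 ∈ Δ(P)^{k_i} and h_j - 1 ∈ Δ(P)^{k_j} for positive integers k_i, k_j, then (h_i - 1)(h_j - 1) ≡ (h_j - 1)(h_i - 1) modulo Δ(P)^{k_i + k_j + 1}. -/
/-!
In characteristic `p`, `h ↦ h - 1` turns `p`-th powers into `p`-th powers, so `P' ⊆ P^p` puts
every commutator `(g, h)` in the dimension subgroup `D_p`. The identity
`gh - hg = hg ((g⁻¹, h⁻¹) - 1)` then gives `⁅FP, FP⁆ ⊆ Δ^p ⊆ Δ^3`, and the Leibniz rule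
propagates this through the filtration: `⁅Δ^m, Δ^n⁆ ⊆ Δ^(m+n+1)`.
-/

/-- The augmentation ideal `Δ(G)` of the group algebra `FG`: the kernel of the
augmentation map sending each group element to `1` (an `F`-submodule, which is a
two-sided ideal, so that its powers make sense). -/
noncomputable def aug (F G : Type*) [Field F] [Group G] :
    Submodule F (MonoidAlgebra F G) :=
  LinearMap.ker (MonoidAlgebra.lift F F G 1).toLinearMap

open MonoidAlgebra
open scoped commutatorElement

attribute [local instance] LieRing.ofAssociativeRing

section LieFiltration

variable {R S : Type*} [CommRing R] [Ring S] [Algebra R S] {I : Submodule R S}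

theorem lie_mul (x y z : S) : ⁅x, y * z⁆ = ⁅x, y⁆ * z + y * ⁅x, z⁆ := by
  simp only [Ring.lie_def]; noncomm_ring

theorem mul_lie (x y z : S) : ⁅x * y, z⁆ = x * ⁅y, z⁆ + ⁅x, z⁆ * y := by
  simp only [Ring.lie_def]; noncomm_ring

theorem mul_mem_pow_of_add_eq {x y : S} {m n l : ℕ} (hx : x ∈ I ^ m) (hy : y ∈ I ^ n)
    (h : m + n = l) : x * y ∈ I ^ l :=
  h ▸ pow_add I m n ▸ Submodule.mul_mem_mul hx hy

variable {k : ℕ} (hI : ∀ a ∈ I, ∀ b ∈ I, ⁅a, b⁆ ∈ I ^ (k + 2))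
include hI

theorem lie_mem_pow_of_mem_pow_of_mem {m : ℕ} {x a : S} (hx : x ∈ I ^ m) (ha : a ∈ I) :
    ⁅x, a⁆ ∈ I ^ (m + 1 + k) := by
  induction hx using Submodule.pow_induction_on_left' with
  | algebraMap r =>
    rw [commute_iff_lie_eq.mp (Algebra.commute_algebraMap_left r a)]
    exact zero_mem _
  | add x y i _ _ ihx ihy => rw [add_lie]; exact add_mem ihx ihy
  | mem_mul b hb i x hx ih =>
    rw [mul_lie]
    exact add_mem (mul_mem_pow_of_add_eq (pow_one I ▸ hb) ih (by omega))
      (mul_mem_pow_of_add_eq (hI b hb a ha) hx (by omega))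

theorem lie_mem_pow_add_of_lie_mem_pow {m n : ℕ} {x y : S} (hx : x ∈ I ^ m) (hy : y ∈ I ^ n) :
    ⁅x, y⁆ ∈ I ^ (m + n + k) := by
  induction hy using Submodule.pow_induction_on_left' with
  | algebraMap r =>
    rw [commute_iff_lie_eq.mp (Algebra.commute_algebraMap_right r x)]
    exact zero_mem _
  | add y z i _ _ ihy ihz => rw [lie_add]; exact add_mem ihy ihz
  | mem_mul b hb i y hy ih =>
    rw [lie_mul]
    exact add_mem (mul_mem_pow_of_add_eq (lie_mem_pow_of_mem_pow_of_mem hI hx hb) hy (by omega))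
      (mul_mem_pow_of_add_eq (pow_one I ▸ hb) ih (by omega))

end LieFiltration

section Augmentation

variable {F G : Type*} [Field F] [Group G]

theorem of_sub_one_mem_aug (g : G) : of F G g - 1 ∈ aug F G := by
  simp [aug]

theorem mul_mem_aug (y : MonoidAlgebra F G) {x : MonoidAlgebra F G} (hx : x ∈ aug F G) :
    y * x ∈ aug F G := by
  simp_all [aug]

theorem mul_mem_aug_pow (y : MonoidAlgebra F G) {n : ℕ} (hn : n ≠ 0)
    {x : MonoidAlgebra F G} (hx : x ∈ aug F G ^ n) : y * x ∈ aug F G ^ n := by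
  obtain ⟨j, rfl⟩ := Nat.exists_eq_succ_of_ne_zero hn
  rw [pow_succ'] at hx ⊢
  refine Submodule.mul_induction_on hx (fun a ha b hb => ?_) (fun a b iha ihb => ?_)
  · rw [← mul_assoc]; exact Submodule.mul_mem_mul (mul_mem_aug y ha) hb
  · rw [mul_add]; exact add_mem iha ihb

theorem aug_pow_le_aug_pow {m n : ℕ} (hm : m ≠ 0) (h : m ≤ n) :
    aug F G ^ n ≤ aug F G ^ m := by
  induction n, h using Nat.le_induction with
  | base => exact le_rfl
  | succ n hmn ih =>
    refine le_trans ?_ ih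
    rw [pow_succ', Submodule.mul_le]
    exact fun y _ x hx => mul_mem_aug_pow y (by omega) hx

variable (F G) in
def dimensionSubgroup (n : ℕ) (hn : n ≠ 0) : Subgroup G where
  carrier := {g | of F G g - 1 ∈ aug F G ^ n}
  one_mem' := by
    change of F G 1 - 1 ∈ aug F G ^ n
    rw [map_one, sub_self]; exact zero_mem _
  mul_mem' {a b} ha hb := by
    have e : of F G (a * b) - 1 = of F G a * (of F G b - 1) + (of F G a - 1) := by
      rw [map_mul]; noncomm_ring
    change of F G (a * b) - 1 ∈ aug F G ^ n
    rw [e]; exact add_mem (mul_mem_aug_pow _ hn hb) ha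
  inv_mem' {a} ha := by
    have e : of F G a⁻¹ - 1 = -(of F G a⁻¹ * (of F G a - 1)) := by
      rw [mul_sub, ← map_mul, inv_mul_cancel, map_one]; noncomm_ring
    change of F G a⁻¹ - 1 ∈ aug F G ^ n
    rw [e]; exact neg_mem (mul_mem_aug_pow _ hn ha)

theorem closure_pow_le_dimensionSubgroup {p : ℕ} [Fact p.Prime] [CharP F p] :
    Subgroup.closure {z : G | ∃ h : G, z = h ^ p} ≤
      dimensionSubgroup F G p (Fact.out : p.Prime).ne_zero := by
  have : CharP (MonoidAlgebra F G) p := charP_of_injective_algebraMap' F p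
  rw [Subgroup.closure_le]
  rintro _ ⟨h, rfl⟩
  change of F G (h ^ p) - 1 ∈ aug F G ^ p
  rw [map_pow, ← one_pow p, ← sub_pow_char_of_commute _ (Commute.one_right _)]
  exact Submodule.pow_mem_pow _ (of_sub_one_mem_aug h) p

theorem lie_of_of (g h : G) :
    ⁅of F G g, of F G h⁆ = of F G (h * g) * (of F G ⁅g⁻¹, h⁻¹⁆ - 1) := by
  have e : h * g * ⁅g⁻¹, h⁻¹⁆ = g * h := by rw [commutatorElement_def]; group
  rw [Ring.lie_def, mul_sub, mul_one, ← map_mul (of F G) (h * g), e, map_mul, map_mul]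

theorem lie_mem_aug_pow_of_commutator_le {n : ℕ} {hn : n ≠ 0}
    (hG : commutator G ≤ dimensionSubgroup F G n hn) (x y : MonoidAlgebra F G) :
    ⁅x, y⁆ ∈ aug F G ^ n := by
  have hof : ∀ g h : G, ⁅of F G g, of F G h⁆ ∈ aug F G ^ n := fun g h => by
    rw [lie_of_of]
    exact mul_mem_aug_pow _ hn
      (hG (Subgroup.commutator_mem_commutator (Subgroup.mem_top _) (Subgroup.mem_top _)))
  induction x using MonoidAlgebra.induction_linear with
  | zero => simp
  | add x x' ihx ihx' => rw [add_lie]; exact add_mem ihx ihx'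
  | single g a =>
    induction y using MonoidAlgebra.induction_linear with
    | zero => simp
    | add y y' ihy ihy' => rw [lie_add]; exact add_mem ihy ihy'
    | single h b =>
      rw [← mul_one a, ← mul_one b, ← smul_single', ← smul_single', smul_lie, lie_smul]
      exact Submodule.smul_mem _ _ (Submodule.smul_mem _ _ (hof g h))

end Augmentation

theorem stmt_10_general {F : Type*} [Field F] {p : ℕ} (hp : 2 < p) [CharP F p]
    {P : Type*} [Group P]
    (hpow : commutator P ≤ Subgroup.closure {z : P | ∃ h : P, z = h ^ p})
    (hi hj : P) (ki kj : ℕ)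
    (h1 : MonoidAlgebra.of F P hi - 1 ∈ aug F P ^ ki)
    (h2 : MonoidAlgebra.of F P hj - 1 ∈ aug F P ^ kj) :
    (MonoidAlgebra.of F P hi - 1) * (MonoidAlgebra.of F P hj - 1) -
      (MonoidAlgebra.of F P hj - 1) * (MonoidAlgebra.of F P hi - 1)
      ∈ aug F P ^ (ki + kj + 1) := by
  have : NeZero p := ⟨by omega⟩
  have : Fact p.Prime := CharP.char_is_prime_of_pos F p
  have hlie : ∀ a ∈ aug F P, ∀ b ∈ aug F P, ⁅a, b⁆ ∈ aug F P ^ (1 + 2) := fun a _ b _ =>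
    aug_pow_le_aug_pow (by omega) (by omega)
      (lie_mem_aug_pow_of_commutator_le (hpow.trans closure_pow_le_dimensionSubgroup) a b)
  rw [← Ring.lie_def]
  exact lie_mem_pow_add_of_lie_mem_pow hlie h1 h2

/-- Let `P` be a powerful finite `p`-group (`P' ⊆ P^p`), `char F = p > 2`.
If `h_i - 1 ∈ Δ(P)^{k_i}` and `h_j - 1 ∈ Δ(P)^{k_j}` then
`(h_i - 1)(h_j - 1) ≡ (h_j - 1)(h_i - 1)` modulo `Δ(P)^{k_i + k_j + 1}`. -/
theorem stmt_10 {F : Type*} [Field F] {p : ℕ} (hp : 2 < p) [CharP F p]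
    {P : Type*} [Group P] [Finite P] (hPp : IsPGroup p P)
    (hpow : commutator P ≤ Subgroup.closure {z : P | ∃ h : P, z = h ^ p})
    (hi hj : P) (ki kj : ℕ) (hki : 0 < ki) (hkj : 0 < kj)
    (h1 : MonoidAlgebra.of F P hi - 1 ∈ aug F P ^ ki)
    (h2 : MonoidAlgebra.of F P hj - 1 ∈ aug F P ^ kj) :
    (MonoidAlgebra.of F P hi - 1) * (MonoidAlgebra.of F P hj - 1) -
      (MonoidAlgebra.of F P hj - 1) * (MonoidAlgebra.of F P hi - 1)
      ∈ aug F P ^ (ki + kj + 1) :=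
  stmt_10_general hp hpow hi hj ki kj h1 h2
end
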